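/- arXiv:2402.13384 — 3 statements merged into one kernel-verified Lean document; each statement's English description precedes it below -/
import Mathlib

section
/- For all real numbers μ and τ, the integral over the real line of Φ(τx + μ) against the standard normal density equals Φ(μ/√(1+τ²)); that is, ∫_ℝ Φ(τx + μ) φ(x) dx = Φ(μ/√(1+τ²)). -/
open MeasureTheory Real Filter

/-- The standard normal density `φ(x) = (2π)^{-1/2} exp(-x²/2)`. -/
noncomputable def stdNormalPDF (x : ℝ) : ℝ :=
  (Real.sqrt (2 * Real.pi))⁻¹ * Real.exp (-x ^ 2 / 2)

/-- The standard normal CDF `Φ(x) = ∫_{-∞}^x φ(t) dt`. -/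
noncomputable def stdNormalCDF (x : ℝ) : ℝ :=
  ∫ t in Set.Iio x, stdNormalPDF t

open ProbabilityTheory
open scoped NNReal

/-! Averaging `Φ(τx + μ) = P(Y < τx + μ)` over `x ∼ N(0,1)` gives `P(Y - τX < μ)` for independent
standard normals `X, Y`, i.e. the mass of `Iio μ` under the convolution `N(0, τ²) ∗ N(0, 1)`,
which is `N(0, 1 + τ²)`. -/

lemma stdNormalPDF_eq_gaussianPDFReal : stdNormalPDF = gaussianPDFReal 0 1 := by
  ext x
  simp [stdNormalPDF, gaussianPDFReal]

lemma stdNormalCDF_eq_measureReal (x : ℝ) :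
    stdNormalCDF x = (gaussianReal 0 1).real (Set.Iio x) := by
  rw [measureReal_def, gaussianReal_apply_eq_integral _ one_ne_zero,
    ENNReal.toReal_ofReal (setIntegral_nonneg measurableSet_Iio
      fun t _ ↦ gaussianPDFReal_nonneg _ _ t), stdNormalCDF, stdNormalPDF_eq_gaussianPDFReal]

lemma integral_mul_stdNormalPDF (f : ℝ → ℝ) :
    ∫ x, f x * stdNormalPDF x = ∫ x, f x ∂gaussianReal 0 1 := by
  simp_rw [integral_gaussianReal_eq_integral_smul one_ne_zero, smul_eq_mul, mul_comm,
    stdNormalPDF_eq_gaussianPDFReal]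

lemma MeasureTheory.Measure.measureReal_conv_eq_integral {G : Type*} [AddMonoid G]
    [MeasurableSpace G] [MeasurableAdd₂ G] (ν ρ : Measure G) [IsFiniteMeasure ρ]
    {s : Set G} (hs : MeasurableSet s) :
    (ν ∗ ρ).real s = ∫ x, ρ.real ((x + ·) ⁻¹' s) ∂ν := by
  have hs' : MeasurableSet ((fun p : G × G ↦ p.1 + p.2) ⁻¹' s) := measurable_add hs
  simp_rw [measureReal_def]
  rw [Measure.conv, Measure.map_apply measurable_add hs, Measure.prod_apply hs', integral_toReal]
  · rfl
  · exact (measurable_measure_prodMk_left hs').aemeasurable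
  · exact ae_of_all _ fun _ ↦ measure_lt_top _ _

lemma gaussianReal_real_Iio {v : ℝ≥0} (hv : v ≠ 0) (a : ℝ) :
    (gaussianReal 0 v).real (Set.Iio a) = (gaussianReal 0 1).real (Set.Iio (a / √v)) := by
  have hσ : 0 < √(v : ℝ) := Real.sqrt_pos.mpr (by positivity)
  have hmap : (gaussianReal 0 1).map (√(v : ℝ) * ·) = gaussianReal 0 v := by
    rw [gaussianReal_map_const_mul]
    congr 1
    · simp
    · ext; simp
  rw [← hmap, map_measureReal_apply (by fun_prop) measurableSet_Iio,
    Set.preimage_const_mul_Iio₀ _ hσ]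

/-- For all real `μ` and `τ`, `∫_ℝ Φ(τx + μ) φ(x) dx = Φ(μ/√(1+τ²))`. -/
theorem integral_stdNormalCDF_mul_stdNormalPDF (μ τ : ℝ) :
    ∫ x : ℝ, stdNormalCDF (τ * x + μ) * stdNormalPDF x
      = stdNormalCDF (μ / Real.sqrt (1 + τ ^ 2)) := by
  have hv : 0 < 1 + τ ^ 2 := by positivity
  have hmeas : Measurable fun y ↦ (gaussianReal 0 1).real (Set.Iio (μ - y)) :=
    Antitone.measurable fun _ _ h ↦ measureReal_mono (Set.Iio_subset_Iio (by linarith))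
  calc ∫ x, stdNormalCDF (τ * x + μ) * stdNormalPDF x
      = ∫ x, (gaussianReal 0 1).real (Set.Iio (μ - -τ * x)) ∂gaussianReal 0 1 := by
        simp_rw [integral_mul_stdNormalPDF, stdNormalCDF_eq_measureReal, neg_mul, sub_neg_eq_add,
          add_comm μ]
    _ = ∫ y, (gaussianReal 0 1).real (Set.Iio (μ - y)) ∂(gaussianReal 0 1).map (-τ * ·) :=
        (integral_map (by fun_prop) hmeas.aestronglyMeasurable).symm
    _ = ((gaussianReal 0 1).map (-τ * ·) ∗ gaussianReal 0 1).real (Set.Iio μ) := by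
        rw [Measure.measureReal_conv_eq_integral _ _ measurableSet_Iio]
        simp_rw [Set.preimage_const_add_Iio]
    _ = (gaussianReal 0 (1 + τ ^ 2).toNNReal).real (Set.Iio μ) := by
        rw [gaussianReal_map_const_mul, gaussianReal_conv_gaussianReal]
        congr 2
        · simp
        · ext
          rw [Real.coe_toNNReal _ hv.le]
          push_cast
          ring
    _ = stdNormalCDF (μ / Real.sqrt (1 + τ ^ 2)) := by
        rw [gaussianReal_real_Iio (by positivity), Real.coe_toNNReal _ hv.le,
          stdNormalCDF_eq_measureReal]
end

section
/- (Drezner decomposition of the bivariate normal CDF) For every ρ ∈ (−1,1) and all b₁, b₂ ∈ ℝ, Φ₂(b₁, b₂; ρ) = Φ(b₁)Φ(b₂) + (1/(2π)) ∫_0^ρ (1−z²)^{−1/2} exp(−(b₁² − 2 b₁ b₂ z + b₂²)/(2(1−z²))) dz. -/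
open MeasureTheory Real Filter

/-- `τ_p = √(2 log p)`. -/
noncomputable def tauP (p : ℕ) : ℝ := Real.sqrt (2 * Real.log p)

/-- The density of `N(μ_p, τ_p²)` at `x`, namely `τ_p⁻¹ φ((x - μ_p)/τ_p)`. -/
noncomputable def mvpDens (μ : ℕ → ℝ) (p : ℕ) (x : ℝ) : ℝ :=
  (tauP p)⁻¹ * stdNormalPDF ((x - μ p) / tauP p)

/-- The bivariate standard normal CDF with correlation `ρ`:
`Φ₂(b₁,b₂;ρ) = ∫_{-∞}^{b₁} ∫_{-∞}^{b₂} (2π√(1-ρ²))⁻¹ exp(-(x²-2ρxy+y²)/(2(1-ρ²))) dy dx`. -/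
noncomputable def biNormalCDF (ρ b₁ b₂ : ℝ) : ℝ :=
  ∫ x in Set.Iio b₁, ∫ y in Set.Iio b₂,
    (2 * Real.pi * Real.sqrt (1 - ρ ^ 2))⁻¹ *
      Real.exp (-(x ^ 2 - 2 * ρ * x * y + y ^ 2) / (2 * (1 - ρ ^ 2)))

/-!
The density `f_ρ` of `Φ₂(·, ·; ρ)` satisfies Plackett's identity `∂f_ρ/∂ρ = ∂²f_ρ/∂x∂y`.
For `|ρ| ≤ r < 1`, `f_ρ` and its derivatives are dominated by `(1 + x²)(1 + y²) e^{-(1-r)(x²+y²)/2}`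
up to a constant, so one may differentiate under the integral sign:
`∂Φ₂/∂ρ = ∫_{-∞}^{b₁} ∫_{-∞}^{b₂} ∂²f_ρ/∂x∂y = f_ρ(b₁, b₂)`.
At `ρ = 0` the density factorizes and `Φ₂ = Φ(b₁) Φ(b₂)`; integrating in `ρ` from `0` gives the
formula, since `f_z(b₁, b₂)` is exactly `(2π)⁻¹` times the integrand.
-/

open Set Topology

noncomputable def gaussianMajorant (c x : ℝ) : ℝ := (1 + x ^ 2) * exp (-c * x ^ 2)

theorem tendsto_gaussianMajorant_cocompact {c : ℝ} (hc : 0 < c) :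
    Tendsto (gaussianMajorant c) (cocompact ℝ) (𝓝 0) := by
  have h := (tendsto_rpow_abs_mul_exp_neg_mul_sq_cocompact hc 0).add
    (tendsto_rpow_abs_mul_exp_neg_mul_sq_cocompact hc 2)
  rw [add_zero] at h
  refine h.congr fun x => ?_
  rw [gaussianMajorant, rpow_zero, rpow_two, sq_abs]
  ring

theorem integrable_gaussianMajorant {c : ℝ} (hc : 0 < c) : Integrable (gaussianMajorant c) := by
  have h := (integrable_exp_neg_mul_sq hc).add (integrable_rpow_mul_exp_neg_mul_sq hc (s := 2)
    (by norm_num))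
  refine h.congr (ae_of_all _ fun x => ?_)
  simp only [Pi.add_apply, gaussianMajorant, rpow_two]
  ring

theorem integrable_of_abs_le_mul_gaussianMajorant {c K : ℝ} (hc : 0 < c) {g : ℝ → ℝ}
    (hg : Continuous g) (hle : ∀ x, |g x| ≤ K * gaussianMajorant c x) : Integrable g :=
  ((integrable_gaussianMajorant hc).const_mul K).mono' hg.aestronglyMeasurable
    (ae_of_all _ hle)

theorem tendsto_atBot_of_abs_le_mul_gaussianMajorant {c K : ℝ} (hc : 0 < c) {g : ℝ → ℝ}
    (hle : ∀ x, |g x| ≤ K * gaussianMajorant c x) : Tendsto g atBot (𝓝 0) := by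
  refine squeeze_zero_norm hle ?_
  simpa using ((tendsto_gaussianMajorant_cocompact hc).mono_left atBot_le_cocompact).const_mul K

theorem setIntegral_Iio_of_hasDerivAt {f f' : ℝ → ℝ} (b : ℝ) (hderiv : ∀ x, HasDerivAt f (f' x) x)
    (hf' : Integrable f') (hf : Tendsto f atBot (𝓝 0)) : ∫ x in Iio b, f' x = f b := by
  rw [← integral_Iic_eq_integral_Iio, integral_Iic_of_hasDerivAt_of_tendsto' (fun x _ => hderiv x)
    hf'.integrableOn hf, sub_zero]

noncomputable def biNormalPDF (ρ x y : ℝ) : ℝ :=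
  (2 * π * √(1 - ρ ^ 2))⁻¹ * exp (-(x ^ 2 - 2 * ρ * x * y + y ^ 2) / (2 * (1 - ρ ^ 2)))

noncomputable def biNormalPDFDerivX (ρ x y : ℝ) : ℝ :=
  -(x - ρ * y) / (1 - ρ ^ 2) * biNormalPDF ρ x y

noncomputable def biNormalPDFDerivXY (ρ x y : ℝ) : ℝ :=
  (ρ * (1 - ρ ^ 2) + (x - ρ * y) * (y - ρ * x)) / (1 - ρ ^ 2) ^ 2 * biNormalPDF ρ x y

theorem one_sub_sq_pos {ρ : ℝ} (hρ : |ρ| < 1) : 0 < 1 - ρ ^ 2 :=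
  sub_pos.2 ((sq_lt_one_iff_abs_lt_one ρ).2 hρ)

theorem hasDerivAt_biNormalPDF_x (ρ x y : ℝ) :
    HasDerivAt (biNormalPDF ρ · y) (biNormalPDFDerivX ρ x y) x := by
  have hq : HasDerivAt (fun x => -(x ^ 2 - 2 * ρ * x * y + y ^ 2) / (2 * (1 - ρ ^ 2)))
      (-(x - ρ * y) / (1 - ρ ^ 2)) x := by
    refine (((hasDerivAt_pow 2 x).sub ((hasDerivAt_id' x).const_mul (2 * ρ) |>.mul_const y)
      |>.add_const (y ^ 2)).fun_neg.div_const _).congr_deriv ?_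
    generalize 1 - ρ ^ 2 = s
    simp only [Nat.cast_ofNat]
    ring
  refine (hq.exp.const_mul _).congr_deriv ?_
  rw [biNormalPDFDerivX, biNormalPDF]
  ring

theorem hasDerivAt_biNormalPDF_y (ρ x y : ℝ) :
    HasDerivAt (biNormalPDF ρ x ·) (-(y - ρ * x) / (1 - ρ ^ 2) * biNormalPDF ρ x y) y := by
  have hq : HasDerivAt (fun y => -(x ^ 2 - 2 * ρ * x * y + y ^ 2) / (2 * (1 - ρ ^ 2)))
      (-(y - ρ * x) / (1 - ρ ^ 2)) y := by
    refine ((((hasDerivAt_id' y).const_mul (2 * ρ * x)).const_sub (x ^ 2)).add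
      (hasDerivAt_pow 2 y) |>.fun_neg.div_const _).congr_deriv ?_
    generalize 1 - ρ ^ 2 = s
    simp only [Nat.cast_ofNat]
    ring
  refine (hq.exp.const_mul _).congr_deriv ?_
  rw [biNormalPDF]
  ring

theorem hasDerivAt_biNormalPDFDerivX_y {ρ : ℝ} (hρ : 1 - ρ ^ 2 ≠ 0) (x y : ℝ) :
    HasDerivAt (biNormalPDFDerivX ρ x ·) (biNormalPDFDerivXY ρ x y) y := by
  refine ((((hasDerivAt_id' y).const_mul ρ).const_sub x).fun_neg.div_const (1 - ρ ^ 2) |>.fun_mul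
    (hasDerivAt_biNormalPDF_y ρ x y)).congr_deriv ?_
  rw [biNormalPDFDerivXY]
  field_simp

theorem hasDerivAt_biNormalPDF_rho {ρ : ℝ} (hρ : |ρ| < 1) (x y : ℝ) :
    HasDerivAt (biNormalPDF · x y) (biNormalPDFDerivXY ρ x y) ρ := by
  have hs := one_sub_sq_pos hρ
  have hs' : HasDerivAt (fun ρ => 1 - ρ ^ 2) (-(2 * ρ)) ρ := by
    simpa using (hasDerivAt_pow 2 ρ).const_sub 1
  have hc := ((hs'.sqrt hs.ne').const_mul (2 * π)).fun_inv (by positivity)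
  have hq : HasDerivAt (fun ρ => -(x ^ 2 - 2 * ρ * x * y + y ^ 2) / (2 * (1 - ρ ^ 2)))
      ((x * y * (1 - ρ ^ 2) - ρ * (x ^ 2 - 2 * ρ * x * y + y ^ 2)) / (1 - ρ ^ 2) ^ 2) ρ := by
    refine ((((hasDerivAt_id' ρ).const_mul 2).mul_const x |>.mul_const y |>.const_sub (x ^ 2)
      |>.add_const (y ^ 2)).fun_neg.div (hs'.const_mul 2) (by positivity)).congr_deriv ?_
    field_simp
  refine (hc.fun_mul hq.exp).congr_deriv ?_
  have hsq : √(1 - ρ ^ 2) ^ 2 = 1 - ρ ^ 2 := sq_sqrt hs.le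
  rw [biNormalPDFDerivXY, biNormalPDF]
  field_simp
  rw [hsq]
  ring

noncomputable def biNormalMajorant (r x y : ℝ) : ℝ :=
  2 / (1 - r ^ 2) ^ 2 * (2 * π * √(1 - r ^ 2))⁻¹ * gaussianMajorant ((1 - r) / 2) x *
    gaussianMajorant ((1 - r) / 2) y

theorem biNormalMajorant_comm (r x y : ℝ) : biNormalMajorant r x y = biNormalMajorant r y x := by
  unfold biNormalMajorant
  ring

theorem quadForm_ge {ρ r : ℝ} (hρ : |ρ| ≤ r) (x y : ℝ) :
    (1 - r) * (x ^ 2 + y ^ 2) ≤ x ^ 2 - 2 * ρ * x * y + y ^ 2 := by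
  obtain ⟨h₁, h₂⟩ := abs_le.1 hρ
  nlinarith [mul_nonneg (sub_nonneg.2 h₂) (sq_nonneg (x + y)),
    mul_nonneg (neg_le_iff_add_nonneg.1 h₁) (sq_nonneg (x - y))]

theorem biNormalPDF_pos {ρ : ℝ} (hρ : |ρ| < 1) (x y : ℝ) : 0 < biNormalPDF ρ x y := by
  have := one_sub_sq_pos hρ
  unfold biNormalPDF
  positivity

theorem biNormalPDF_le {ρ r : ℝ} (hρ : |ρ| ≤ r) (hr : r < 1) (x y : ℝ) :
    biNormalPDF ρ x y ≤
      (2 * π * √(1 - r ^ 2))⁻¹ * (exp (-((1 - r) / 2) * x ^ 2) * exp (-((1 - r) / 2) * y ^ 2)) := by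
  have hs := one_sub_sq_pos (hρ.trans_lt hr)
  have hsr : 0 < 1 - r ^ 2 := by nlinarith [abs_nonneg ρ]
  have hρr := sq_le_sq' (abs_le.1 hρ).1 (abs_le.1 hρ).2
  have hQ := quadForm_ge hρ x y
  have hexp : (1 - r) / 2 * x ^ 2 + (1 - r) / 2 * y ^ 2 ≤
      (x ^ 2 - 2 * ρ * x * y + y ^ 2) / (2 * (1 - ρ ^ 2)) := by
    rw [le_div_iff₀ (by positivity)]
    nlinarith [mul_nonneg (mul_nonneg (sub_nonneg.2 hr.le) (add_nonneg (sq_nonneg x) (sq_nonneg y)))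
      (sq_nonneg ρ)]
  refine mul_le_mul (inv_anti₀ (by positivity) ?_) ?_ (exp_pos _).le (by positivity)
  · gcongr
  · rw [← exp_add, exp_le_exp, neg_div]
    linarith

theorem abs_mul_biNormalPDF_le {ρ r p x y : ℝ} (hρ : |ρ| ≤ r) (hr : r < 1)
    (hp : |p| * (1 - ρ ^ 2) ^ 2 ≤ 2 * ((1 + x ^ 2) * (1 + y ^ 2))) :
    |p * biNormalPDF ρ x y| ≤ biNormalMajorant r x y := by
  have hf := biNormalPDF_pos (hρ.trans_lt hr) x y
  have hsr : 0 < 1 - r ^ 2 := by nlinarith [abs_nonneg ρ]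
  have hp' : |p| ≤ 2 / (1 - r ^ 2) ^ 2 * ((1 + x ^ 2) * (1 + y ^ 2)) := by
    rw [div_mul_eq_mul_div, le_div_iff₀ (by positivity)]
    refine le_trans (mul_le_mul_of_nonneg_left ?_ (abs_nonneg p)) hp
    have := sq_le_sq' (abs_le.1 hρ).1 (abs_le.1 hρ).2
    gcongr
  rw [abs_mul, abs_of_pos hf]
  calc |p| * biNormalPDF ρ x y
      ≤ 2 / (1 - r ^ 2) ^ 2 * ((1 + x ^ 2) * (1 + y ^ 2)) * ((2 * π * √(1 - r ^ 2))⁻¹ *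
          (exp (-((1 - r) / 2) * x ^ 2) * exp (-((1 - r) / 2) * y ^ 2))) :=
        mul_le_mul hp' (biNormalPDF_le hρ hr x y) hf.le (by positivity)
    _ = biNormalMajorant r x y := by
        rw [biNormalMajorant, gaussianMajorant, gaussianMajorant]
        ring

theorem abs_biNormalPDF_le {ρ r : ℝ} (hρ : |ρ| ≤ r) (hr : r < 1) (x y : ℝ) :
    |biNormalPDF ρ x y| ≤ biNormalMajorant r x y := by
  have hs := one_sub_sq_pos (hρ.trans_lt hr)
  have h1 : (1 - ρ ^ 2) ^ 2 ≤ 1 := by nlinarith [sq_nonneg ρ]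
  simpa using abs_mul_biNormalPDF_le (p := 1) hρ hr (by
    rw [abs_one, one_mul]
    nlinarith [sq_nonneg x, sq_nonneg y, mul_nonneg (sq_nonneg x) (sq_nonneg y)])

theorem abs_sub_mul_le {ρ : ℝ} (hρ : |ρ| ≤ 1) (x y : ℝ) : |x - ρ * y| ≤ |x| + |y| :=
  calc |x - ρ * y| ≤ |x| + |ρ| * |y| := by simpa only [abs_mul] using abs_sub x (ρ * y)
    _ ≤ |x| + |y| := by gcongr; exact mul_le_of_le_one_left (abs_nonneg y) hρ

theorem abs_biNormalPDFDerivX_le {ρ r : ℝ} (hρ : |ρ| ≤ r) (hr : r < 1) (x y : ℝ) :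
    |biNormalPDFDerivX ρ x y| ≤ biNormalMajorant r x y := by
  have hs := one_sub_sq_pos (hρ.trans_lt hr)
  have hxy := abs_sub_mul_le (hρ.trans hr.le) x y
  refine abs_mul_biNormalPDF_le hρ hr ?_
  rw [abs_div, abs_neg, abs_of_pos hs, div_mul_eq_mul_div, pow_two, ← mul_assoc,
    mul_div_cancel_right₀ _ hs.ne']
  calc |x - ρ * y| * (1 - ρ ^ 2) ≤ |x| + |y| := by nlinarith [abs_nonneg (x - ρ * y), sq_nonneg ρ]
    _ ≤ 2 * ((1 + x ^ 2) * (1 + y ^ 2)) := by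
      nlinarith [sq_abs x, sq_abs y, sq_nonneg (|x| - 1), sq_nonneg (|y| - 1),
        mul_nonneg (sq_nonneg x) (sq_nonneg y)]

theorem abs_biNormalPDFDerivXY_le {ρ r : ℝ} (hρ : |ρ| ≤ r) (hr : r < 1) (x y : ℝ) :
    |biNormalPDFDerivXY ρ x y| ≤ biNormalMajorant r x y := by
  have hs := one_sub_sq_pos (hρ.trans_lt hr)
  have hρ1 := hρ.trans hr.le
  have hxy := abs_sub_mul_le hρ1 x y
  have hyx := abs_sub_mul_le hρ1 y x
  refine abs_mul_biNormalPDF_le hρ hr ?_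
  rw [abs_div, abs_of_pos (by positivity : (0 : ℝ) < (1 - ρ ^ 2) ^ 2),
    div_mul_cancel₀ _ (by positivity)]
  calc |ρ * (1 - ρ ^ 2) + (x - ρ * y) * (y - ρ * x)|
      ≤ |ρ| * |1 - ρ ^ 2| + |x - ρ * y| * |y - ρ * x| := by
        rw [← abs_mul, ← abs_mul]
        exact abs_add_le _ _
    _ ≤ 1 * 1 + (|x| + |y|) * (|y| + |x|) := by
        gcongr
        rw [abs_of_pos hs]
        nlinarith [sq_nonneg ρ]
    _ ≤ 2 * ((1 + x ^ 2) * (1 + y ^ 2)) := by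
        nlinarith [sq_abs x, sq_abs y, sq_nonneg (|x| - |y|),
          mul_nonneg (sq_nonneg x) (sq_nonneg y)]

theorem continuous_biNormalPDF (ρ : ℝ) : Continuous fun p : ℝ × ℝ => biNormalPDF ρ p.1 p.2 := by
  unfold biNormalPDF; fun_prop

theorem continuous_biNormalPDFDerivX (ρ : ℝ) :
    Continuous fun p : ℝ × ℝ => biNormalPDFDerivX ρ p.1 p.2 := by
  unfold biNormalPDFDerivX biNormalPDF; fun_prop

theorem continuous_biNormalPDFDerivXY (ρ : ℝ) :
    Continuous fun p : ℝ × ℝ => biNormalPDFDerivXY ρ p.1 p.2 := by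
  unfold biNormalPDFDerivXY biNormalPDF; fun_prop

theorem integral_Iio_biNormalPDFDerivXY {ρ : ℝ} (hρ : |ρ| < 1) (x b : ℝ) :
    ∫ y in Iio b, biNormalPDFDerivXY ρ x y = biNormalPDFDerivX ρ x b := by
  have hc : 0 < (1 - |ρ|) / 2 := by linarith
  refine setIntegral_Iio_of_hasDerivAt b
    (fun y => hasDerivAt_biNormalPDFDerivX_y (one_sub_sq_pos hρ).ne' x y)
    (integrable_of_abs_le_mul_gaussianMajorant hc
      ((continuous_biNormalPDFDerivXY ρ).comp (.prodMk_right x))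
      (abs_biNormalPDFDerivXY_le le_rfl hρ x))
    (tendsto_atBot_of_abs_le_mul_gaussianMajorant hc (abs_biNormalPDFDerivX_le le_rfl hρ x))

theorem integral_Iio_biNormalPDFDerivX {ρ : ℝ} (hρ : |ρ| < 1) (b y : ℝ) :
    ∫ x in Iio b, biNormalPDFDerivX ρ x y = biNormalPDF ρ b y := by
  have hc : 0 < (1 - |ρ|) / 2 := by linarith
  refine setIntegral_Iio_of_hasDerivAt b (fun x => hasDerivAt_biNormalPDF_x ρ x y)
    (integrable_of_abs_le_mul_gaussianMajorant hc
      ((continuous_biNormalPDFDerivX ρ).comp (.prodMk_left y))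
      fun x => (abs_biNormalPDFDerivX_le le_rfl hρ x y).trans_eq (biNormalMajorant_comm _ _ _))
    (tendsto_atBot_of_abs_le_mul_gaussianMajorant hc
      fun x => (abs_biNormalPDF_le le_rfl hρ x y).trans_eq (biNormalMajorant_comm _ _ _))

theorem integrable_biNormalMajorant {r : ℝ} (hr : r < 1) :
    Integrable fun p : ℝ × ℝ => biNormalMajorant r p.1 p.2 := by
  have hc : 0 < (1 - r) / 2 := by linarith
  simp_rw [biNormalMajorant, mul_assoc _ (gaussianMajorant _ _)]
  rw [Measure.volume_eq_prod]
  exact ((integrable_gaussianMajorant hc).mul_prod (integrable_gaussianMajorant hc)).const_mul _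

theorem integrable_of_abs_le_biNormalMajorant {r : ℝ} (hr : r < 1) {g : ℝ × ℝ → ℝ}
    (hg : Continuous g) (hle : ∀ p, |g p| ≤ biNormalMajorant r p.1 p.2) : Integrable g :=
  (integrable_biNormalMajorant hr).mono' hg.aestronglyMeasurable (ae_of_all _ hle)

theorem setIntegral_biNormalPDFDerivXY_prod {ρ : ℝ} (hρ : |ρ| < 1) (b₁ b₂ : ℝ) :
    ∫ p in Iio b₁ ×ˢ Iio b₂, biNormalPDFDerivXY ρ p.1 p.2 = biNormalPDF ρ b₁ b₂ := by
  have hint := integrable_of_abs_le_biNormalMajorant hρ (continuous_biNormalPDFDerivXY ρ)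
    fun p => abs_biNormalPDFDerivXY_le le_rfl hρ p.1 p.2
  rw [Measure.volume_eq_prod, setIntegral_prod _ hint.integrableOn]
  simp_rw [integral_Iio_biNormalPDFDerivXY hρ]
  exact integral_Iio_biNormalPDFDerivX hρ b₁ b₂

theorem biNormalCDF_eq_setIntegral_prod {ρ : ℝ} (hρ : |ρ| < 1) (b₁ b₂ : ℝ) :
    biNormalCDF ρ b₁ b₂ = ∫ p in Iio b₁ ×ˢ Iio b₂, biNormalPDF ρ p.1 p.2 := by
  have hint := integrable_of_abs_le_biNormalMajorant hρ (continuous_biNormalPDF ρ)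
    fun p => abs_biNormalPDF_le le_rfl hρ p.1 p.2
  rw [Measure.volume_eq_prod, setIntegral_prod _ hint.integrableOn]
  rfl

theorem biNormalPDF_zero (x y : ℝ) : biNormalPDF 0 x y = stdNormalPDF x * stdNormalPDF y := by
  rw [biNormalPDF, stdNormalPDF, stdNormalPDF, mul_mul_mul_comm, ← mul_inv, ← exp_add,
    mul_self_sqrt (by positivity), zero_pow two_ne_zero, sub_zero, sqrt_one, mul_one]
  ring_nf

theorem setIntegral_biNormalPDF_zero_prod (b₁ b₂ : ℝ) :
    ∫ p in Iio b₁ ×ˢ Iio b₂, biNormalPDF 0 p.1 p.2 = stdNormalCDF b₁ * stdNormalCDF b₂ := by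
  simp_rw [biNormalPDF_zero]
  rw [Measure.volume_eq_prod, setIntegral_prod_mul]
  rfl

theorem hasDerivAt_setIntegral_biNormalPDF {ρ : ℝ} (hρ : |ρ| < 1) (s : Set (ℝ × ℝ)) :
    HasDerivAt (fun ρ => ∫ p in s, biNormalPDF ρ p.1 p.2)
      (∫ p in s, biNormalPDFDerivXY ρ p.1 p.2) ρ := by
  obtain ⟨r, hρr, hr⟩ := exists_between hρ
  have hball : ∀ z ∈ Metric.ball ρ (r - |ρ|), |z| ≤ r := fun z hz => by
    have := abs_sub_abs_le_abs_sub z ρ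
    rw [Metric.mem_ball, dist_eq] at hz
    linarith
  exact (hasDerivAt_integral_of_dominated_loc_of_deriv_le (Metric.ball_mem_nhds ρ (by linarith))
    (.of_forall fun z => (continuous_biNormalPDF z).aestronglyMeasurable.restrict)
    (integrable_of_abs_le_biNormalMajorant hr (continuous_biNormalPDF ρ)
      fun p => abs_biNormalPDF_le hρr.le hr p.1 p.2).integrableOn
    (continuous_biNormalPDFDerivXY ρ).aestronglyMeasurable.restrict
    (ae_of_all _ fun p z hz => abs_biNormalPDFDerivXY_le (hball z hz) hr p.1 p.2)
    (integrable_biNormalMajorant hr).integrableOn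
    (ae_of_all _ fun p z hz => hasDerivAt_biNormalPDF_rho ((hball z hz).trans_lt hr) p.1 p.2)).2

/-- Drezner decomposition: for `ρ ∈ (-1,1)` and all `b₁, b₂`,
`Φ₂(b₁,b₂;ρ) = Φ(b₁)Φ(b₂) + (2π)⁻¹ ∫_0^ρ (1-z²)^{-1/2} exp(-(b₁²-2b₁b₂z+b₂²)/(2(1-z²))) dz`. -/
theorem biNormalCDF_drezner (ρ : ℝ) (hρ : ρ ∈ Set.Ioo (-1 : ℝ) 1) (b₁ b₂ : ℝ) :
    biNormalCDF ρ b₁ b₂ =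
      stdNormalCDF b₁ * stdNormalCDF b₂ +
        (2 * Real.pi)⁻¹ *
          ∫ z in (0 : ℝ)..ρ,
            (Real.sqrt (1 - z ^ 2))⁻¹ *
              Real.exp (-(b₁ ^ 2 - 2 * b₁ * b₂ * z + b₂ ^ 2) / (2 * (1 - z ^ 2))) := by
  have habs : ∀ z ∈ uIcc 0 ρ, |z| < 1 := fun z hz =>
    abs_lt.2 (ordConnected_Ioo.uIcc_subset (by norm_num) hρ hz)
  have hderiv : ∀ z ∈ uIcc 0 ρ, HasDerivAt (fun z => ∫ p in Iio b₁ ×ˢ Iio b₂, biNormalPDF z p.1 p.2)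
      (biNormalPDF z b₁ b₂) z := fun z hz => by
    simpa only [setIntegral_biNormalPDFDerivXY_prod (habs z hz)] using
      hasDerivAt_setIntegral_biNormalPDF (habs z hz) (Iio b₁ ×ˢ Iio b₂)
  have hcont : ContinuousOn (biNormalPDF · b₁ b₂) (uIcc 0 ρ) := fun z hz =>
    (hasDerivAt_biNormalPDF_rho (habs z hz) b₁ b₂).continuousAt.continuousWithinAt
  rw [biNormalCDF_eq_setIntegral_prod (abs_lt.2 hρ), ← setIntegral_biNormalPDF_zero_prod,
    ← sub_eq_iff_eq_add', ← intervalIntegral.integral_eq_sub_of_hasDerivAt hderiv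
      hcont.intervalIntegrable, ← intervalIntegral.integral_const_mul]
  congr 1 with z
  rw [biNormalPDF, mul_inv]
  ring_nf
end

section
/- For every fixed x ∈ ℝ, the rescaled prior density of the MVP-IBP coefficients satisfies lim_{p→∞} ((α+p)/α) · τ_p⁻¹ φ((x − μ_p)/τ_p) = exp(−x − 1/2). -/
open MeasureTheory Real Filter

/-!
Put `z_p = μ_p / √(1 + τ_p²)`, so that `Φ(z_p) = α/(α+p)` and the rescaled density is
`τ_p⁻¹ φ((x - μ_p)/τ_p) / Φ(z_p)`. Mills' ratio `Φ(z) ∼ φ(z)/(-z)` as `z → -∞` turns this into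
`(-z_p/τ_p) · φ((x - μ_p)/τ_p) / φ(z_p)`, and completing the square in the exponent shows that
this tends to `exp(-x - 1/2)` as soon as `z_p/τ_p → -1`. Taking logarithms in Mills' ratio gives
`z_p²/2 ∼ -log Φ(z_p) = log((α+p)/α) ∼ log p = τ_p²/2`, which is that limit.
-/

open Topology

lemma tendsto_sq_atBot_atTop : Tendsto (fun z : ℝ => z ^ 2) atBot atTop :=
  ((tendsto_pow_atTop two_ne_zero).comp tendsto_neg_atBot_atTop).congr fun z => by simp

lemma stdNormalPDF_pos (x : ℝ) : 0 < stdNormalPDF x := by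
  unfold stdNormalPDF
  positivity

lemma continuous_stdNormalPDF : Continuous stdNormalPDF := by
  unfold stdNormalPDF
  fun_prop

lemma integrable_stdNormalPDF : Integrable stdNormalPDF := by
  refine ((integrable_exp_neg_mul_sq (b := 1 / 2) (by norm_num)).const_mul
    (√(2 * π))⁻¹).congr (.of_forall fun x => ?_)
  unfold stdNormalPDF
  ring_nf

lemma integrable_mul_stdNormalPDF : Integrable (fun t => t * stdNormalPDF t) := by
  refine ((integrable_mul_exp_neg_mul_sq (b := 1 / 2) (by norm_num)).const_mul
    (√(2 * π))⁻¹).congr (.of_forall fun x => ?_)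
  unfold stdNormalPDF
  ring_nf

lemma hasDerivAt_stdNormalPDF (x : ℝ) :
    HasDerivAt stdNormalPDF (-x * stdNormalPDF x) x := by
  have h : HasDerivAt (fun y : ℝ => -y ^ 2 / 2) (-x) x :=
    ((hasDerivAt_pow 2 x).neg.div_const 2).congr_deriv (by push_cast; ring)
  refine (h.exp.const_mul (√(2 * π))⁻¹).congr_deriv ?_
  unfold stdNormalPDF
  ring

lemma tendsto_stdNormalPDF_atBot : Tendsto stdNormalPDF atBot (𝓝 0) := by
  have h : Tendsto (fun t : ℝ => -t ^ 2 / 2) atBot atBot :=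
    (tendsto_neg_atTop_atBot.comp tendsto_sq_atBot_atTop).atBot_div_const two_pos
  have := (tendsto_exp_atBot.comp h).const_mul (√(2 * π))⁻¹
  rwa [mul_zero] at this

lemma stdNormalCDF_eq_integral_Iic (z : ℝ) :
    stdNormalCDF z = ∫ t in Set.Iic z, stdNormalPDF t :=
  integral_Iic_eq_integral_Iio.symm

lemma integral_Iic_mul_stdNormalPDF (z : ℝ) :
    ∫ t in Set.Iic z, t * stdNormalPDF t = -stdNormalPDF z := by
  have h := integral_Iic_of_hasDerivAt_of_tendsto' (f := fun t => -stdNormalPDF t) (a := z)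
    (fun t _ => (hasDerivAt_stdNormalPDF t).neg.congr_deriv (by ring))
    integrable_mul_stdNormalPDF.integrableOn (by simpa using tendsto_stdNormalPDF_atBot.neg)
  rwa [sub_zero] at h

/-- Upper Mills bound: on `t ≤ z < 0` the density is at most `(t / z) φ(t)`. -/
lemma stdNormalCDF_le_of_neg {z : ℝ} (hz : z < 0) :
    stdNormalCDF z ≤ stdNormalPDF z / -z := by
  have hint : IntegrableOn (fun t => t / z * stdNormalPDF t) (Set.Iic z) :=
    (integrable_mul_stdNormalPDF.const_mul z⁻¹).integrableOn.congr_fun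
      (fun t _ => by ring) measurableSet_Iic
  calc stdNormalCDF z = ∫ t in Set.Iic z, stdNormalPDF t := stdNormalCDF_eq_integral_Iic z
    _ ≤ ∫ t in Set.Iic z, t / z * stdNormalPDF t := by
      refine setIntegral_mono_on integrable_stdNormalPDF.integrableOn hint measurableSet_Iic
        fun t ht => le_mul_of_one_le_left (stdNormalPDF_pos t).le ?_
      rwa [one_le_div_of_neg hz]
    _ = z⁻¹ * ∫ t in Set.Iic z, t * stdNormalPDF t := by
      rw [← integral_const_mul]
      exact setIntegral_congr_fun measurableSet_Iic fun t _ => by ring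
    _ = stdNormalPDF z / -z := by
      rw [integral_Iic_mul_stdNormalPDF]
      ring

lemma hasDerivAt_neg_mul_stdNormalPDF_div (t : ℝ) :
    HasDerivAt (fun s => -s * stdNormalPDF s / (1 + s ^ 2))
      (stdNormalPDF t * (1 - 2 / (1 + t ^ 2) ^ 2)) t := by
  have hnum : HasDerivAt (fun s => -s * stdNormalPDF s)
      (-1 * stdNormalPDF t + -t * (-t * stdNormalPDF t)) t :=
    (hasDerivAt_id t).neg.mul (hasDerivAt_stdNormalPDF t)
  have hden : HasDerivAt (fun s : ℝ => 1 + s ^ 2) (2 * t) t :=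
    ((hasDerivAt_pow 2 t).const_add 1).congr_deriv (by push_cast; ring)
  refine (hnum.div hden (by positivity)).congr_deriv ?_
  field_simp
  ring

lemma tendsto_neg_mul_stdNormalPDF_div_atBot :
    Tendsto (fun s => -s * stdNormalPDF s / (1 + s ^ 2)) atBot (𝓝 0) := by
  have hbdd : IsBoundedUnder (· ≤ ·) atBot (norm ∘ fun s : ℝ => -s / (1 + s ^ 2)) := by
    refine isBoundedUnder_of ⟨1, fun s => ?_⟩
    rw [Function.comp_apply, norm_div, norm_neg, Real.norm_eq_abs, Real.norm_eq_abs,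
      abs_of_pos (by positivity : (0 : ℝ) < 1 + s ^ 2), div_le_one (by positivity)]
    nlinarith [abs_nonneg s, sq_abs s]
  refine (tendsto_stdNormalPDF_atBot.zero_mul_isBoundedUnder_le hbdd).congr fun s => ?_
  ring

lemma integrable_stdNormalPDF_mul_one_sub :
    Integrable (fun t => stdNormalPDF t * (1 - 2 / (1 + t ^ 2) ^ 2)) := by
  refine integrable_stdNormalPDF.mono'
    (continuous_stdNormalPDF.measurable.mul (by fun_prop)).aestronglyMeasurable
    (.of_forall fun t => ?_)
  have h1 : 1 ≤ (1 + t ^ 2) ^ 2 := by nlinarith [sq_nonneg t]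
  have h2 : 0 < 2 / (1 + t ^ 2) ^ 2 := by positivity
  have h3 : 2 / (1 + t ^ 2) ^ 2 ≤ 2 := div_le_self zero_le_two h1
  rw [norm_mul, Real.norm_of_nonneg (stdNormalPDF_pos t).le, Real.norm_eq_abs]
  exact mul_le_of_le_one_right (stdNormalPDF_pos t).le (abs_le.2 ⟨by linarith, by linarith⟩)

/-- Lower Mills bound, by integrating the derivative of `-s φ(s) / (1 + s²)`, which is at most
`φ`. -/
lemma neg_mul_stdNormalPDF_div_le_stdNormalCDF (z : ℝ) :
    -z * stdNormalPDF z / (1 + z ^ 2) ≤ stdNormalCDF z := by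
  have hftc := integral_Iic_of_hasDerivAt_of_tendsto' (a := z)
    (fun t _ => hasDerivAt_neg_mul_stdNormalPDF_div t)
    integrable_stdNormalPDF_mul_one_sub.integrableOn tendsto_neg_mul_stdNormalPDF_div_atBot
  rw [sub_zero] at hftc
  rw [stdNormalCDF_eq_integral_Iic, ← hftc]
  refine setIntegral_mono_on integrable_stdNormalPDF_mul_one_sub.integrableOn
    integrable_stdNormalPDF.integrableOn measurableSet_Iic fun t _ => ?_
  have : 0 < 2 / (1 + t ^ 2) ^ 2 := by positivity
  nlinarith [stdNormalPDF_pos t]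

lemma monotone_stdNormalCDF : Monotone stdNormalCDF := fun a b hab => by
  simp only [stdNormalCDF_eq_integral_Iic]
  exact setIntegral_mono_set integrable_stdNormalPDF.integrableOn
    (.of_forall fun t => (stdNormalPDF_pos t).le) (Set.Iic_subset_Iic.2 hab).eventuallyLE

lemma stdNormalCDF_pos (z : ℝ) : 0 < stdNormalCDF z := by
  set w := min z (-1)
  have hw : w < 0 := (min_le_right z (-1)).trans_lt (by norm_num)
  calc 0 < -w * stdNormalPDF w / (1 + w ^ 2) := by
        have := stdNormalPDF_pos w
        have : 0 < -w := neg_pos.2 hw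
        positivity
    _ ≤ stdNormalCDF w := neg_mul_stdNormalPDF_div_le_stdNormalCDF w
    _ ≤ stdNormalCDF z := monotone_stdNormalCDF (min_le_left z (-1))

lemma tendsto_atBot_of_tendsto_stdNormalCDF_zero {ι : Type*} {l : Filter ι} {f : ι → ℝ}
    (h : Tendsto (fun i => stdNormalCDF (f i)) l (𝓝 0)) : Tendsto f l atBot :=
  tendsto_atBot.2 fun M => (h.eventually_lt_const (stdNormalCDF_pos M)).mono fun _ hi =>
    (monotone_stdNormalCDF.reflect_lt hi).le

lemma tendsto_neg_mul_stdNormalCDF_div_stdNormalPDF_atBot :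
    Tendsto (fun z => -z * stdNormalCDF z / stdNormalPDF z) atBot (𝓝 1) := by
  have hlow : Tendsto (fun z : ℝ => z ^ 2 / (1 + z ^ 2)) atBot (𝓝 1) := by
    have hsq : Tendsto (fun z : ℝ => 1 + z ^ 2) atBot atTop :=
      tendsto_atTop_add_const_left _ _ tendsto_sq_atBot_atTop
    refine (by simpa using tendsto_const_nhds.sub hsq.inv_tendsto_atTop :
      Tendsto (fun z : ℝ => 1 - (1 + z ^ 2)⁻¹) atBot (𝓝 1)).congr fun z => ?_
    field_simp
    ring
  refine tendsto_of_tendsto_of_tendsto_of_le_of_le' hlow tendsto_const_nhds ?_ ?_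
  all_goals filter_upwards [eventually_lt_atBot 0] with z hz
  all_goals have hφ := stdNormalPDF_pos z
  · have h := neg_mul_stdNormalPDF_div_le_stdNormalCDF z
    rw [div_le_iff₀ (by positivity)] at h
    rw [div_le_div_iff₀ (by positivity) hφ]
    nlinarith [mul_le_mul_of_nonneg_left h (neg_nonneg.2 hz.le)]
  · have h := stdNormalCDF_le_of_neg hz
    rw [le_div_iff₀ (neg_pos.2 hz)] at h
    rw [div_le_one hφ]
    linarith

lemma tendsto_log_div_sq_atTop : Tendsto (fun y => log y / (y ^ 2 / 2)) atTop (𝓝 0) := by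
  have h := isLittleO_log_id_atTop.tendsto_div_nhds_zero.mul
    (tendsto_const_nhds (x := (2 : ℝ)).div_atTop tendsto_id)
  rw [mul_zero] at h
  refine h.congr' ((eventually_gt_atTop 0).mono fun y hy => ?_)
  simp only [id]
  field_simp

lemma neg_log_stdNormalCDF_eq {z : ℝ} (hz : z < 0) :
    -log (stdNormalCDF z) = z ^ 2 / 2 + log (-z) + log √(2 * π)
      - log (-z * stdNormalCDF z / stdNormalPDF z) := by
  have hΦ := stdNormalCDF_pos z
  rw [log_div (by nlinarith) (stdNormalPDF_pos z).ne', log_mul (by linarith) hΦ.ne',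
    stdNormalPDF, log_mul (by positivity) (exp_pos _).ne', log_inv, log_exp]
  ring

lemma tendsto_neg_log_stdNormalCDF_div_atBot :
    Tendsto (fun z => -log (stdNormalCDF z) / (z ^ 2 / 2)) atBot (𝓝 1) := by
  have hsq : Tendsto (fun z : ℝ => z ^ 2 / 2) atBot atTop :=
    tendsto_sq_atBot_atTop.atTop_div_const two_pos
  have hlog : Tendsto (fun z : ℝ => log (-z) / (z ^ 2 / 2)) atBot (𝓝 0) :=
    (tendsto_log_div_sq_atTop.comp tendsto_neg_atBot_atTop).congr fun z => by simp
  have hmills : Tendsto (fun z => log √(2 * π) - log (-z * stdNormalCDF z / stdNormalPDF z))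
      atBot (𝓝 (log √(2 * π) - log 1)) :=
    tendsto_const_nhds.sub ((continuousAt_log one_ne_zero).tendsto.comp
      tendsto_neg_mul_stdNormalCDF_div_stdNormalPDF_atBot)
  have h := (tendsto_const_nhds (x := (1 : ℝ))).add (hlog.add (hmills.div_atTop hsq))
  rw [add_zero, add_zero] at h
  refine h.congr' ((eventually_lt_atBot 0).mono fun z hz => ?_)
  dsimp only
  rw [neg_log_stdNormalCDF_eq hz]
  have := hz.ne
  field_simp
  ring

/-- Completing the square: with `σ² = 1 + τ²`, `φ((x - zσ)/τ)` is `φ(z)` times a factor that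
tends to `exp(-1/2 - x)` when `z/τ → -1` and `τ → ∞`. -/
lemma stdNormalPDF_sub_mul_div {x z σ τ : ℝ} (hτ : τ ≠ 0) (hσ : σ ^ 2 = 1 + τ ^ 2) :
    stdNormalPDF ((x - z * σ) / τ) =
      stdNormalPDF z * exp (-(z / τ) ^ 2 / 2 + x * (z / τ) * (σ / τ) - (x / τ) ^ 2 / 2) := by
  simp only [stdNormalPDF, mul_assoc, ← exp_add]
  congr 2
  field_simp
  linear_combination (-z ^ 2) * hσ

lemma tendsto_inv_stdNormalCDF_mul_stdNormalPDF {ι : Type*} {l : Filter ι} {z τ : ι → ℝ}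
    (x : ℝ) (hτ : Tendsto τ l atTop) (hzτ : Tendsto (fun i => z i / τ i) l (𝓝 (-1))) :
    Tendsto (fun i => (stdNormalCDF (z i))⁻¹ *
      ((τ i)⁻¹ * stdNormalPDF ((x - z i * √(1 + τ i ^ 2)) / τ i))) l (𝓝 (exp (-x - 1 / 2))) := by
  have hτpos := hτ.eventually_gt_atTop 0
  have hz : Tendsto z l atBot :=
    (hzτ.neg_mul_atTop (by norm_num) hτ).congr' (hτpos.mono fun i hi => div_mul_cancel₀ _ hi.ne')
  have hσ : Tendsto (fun i => √(1 + τ i ^ 2) / τ i) l (𝓝 1) := by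
    have h := ((hτ.inv_tendsto_atTop.pow 2).const_add 1).sqrt
    rw [zero_pow two_ne_zero, add_zero, sqrt_one] at h
    refine h.congr' (hτpos.mono fun i hi => ?_)
    dsimp only
    rw [Pi.inv_apply, eq_div_iff hi.ne', ← sqrt_sq hi.le, ← sqrt_mul (by positivity), sqrt_sq hi.le]
    congr 1
    field_simp
    ring
  have hx : Tendsto (fun i => x / τ i) l (𝓝 0) := tendsto_const_nhds.div_atTop hτ
  have hexp := (((hzτ.pow 2).neg.div_const 2).add ((hzτ.const_mul x).mul hσ)).sub
    ((hx.pow 2).div_const 2) |>.rexp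
  have hmills := (tendsto_neg_mul_stdNormalCDF_div_stdNormalPDF_atBot.comp hz).inv₀ one_ne_zero
  have h := (hmills.mul hzτ.neg).mul hexp
  convert h.congr' ?_ using 2
  · norm_num
    ring_nf
  filter_upwards [hτpos, hz.eventually_lt_atBot 0] with i hτi hzi
  have := stdNormalPDF_pos (z i)
  rw [stdNormalPDF_sub_mul_div hτi.ne' (sq_sqrt (by positivity))]
  simp only [Function.comp_apply]
  field_simp [hzi.ne]

lemma tauP_sq (p : ℕ) : tauP p ^ 2 = 2 * log p :=
  sq_sqrt (mul_nonneg zero_le_two (log_natCast_nonneg p))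

lemma tendsto_tauP_atTop : Tendsto tauP atTop atTop :=
  tendsto_sqrt_atTop.comp
    ((tendsto_log_atTop.comp tendsto_natCast_atTop_atTop).const_mul_atTop two_pos)

lemma tendsto_log_add_div_div_log_atTop {α : ℝ} (hα : α ≠ 0) :
    Tendsto (fun y => log ((α + y) / α) / log y) atTop (𝓝 1) := by
  have h := tendsto_const_nhds (x := (1 : ℝ)) |>.add
    (((tendsto_log_comp_add_sub_log α).sub_const (log α)).div_atTop tendsto_log_atTop)
  rw [add_zero] at h
  refine h.congr' ((eventually_gt_atTop (max 1 (-α))).mono fun y hy => ?_)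
  have hy1 : 1 < y := (le_max_left _ _).trans_lt hy
  have hyα : 0 < y + α := by linarith [le_max_right 1 (-α)]
  dsimp only
  rw [add_comm α, log_div hyα.ne' hα]
  field_simp [(log_pos hy1).ne']
  ring

lemma tendsto_div_tauP_of_stdNormalCDF_eq {α : ℝ} (hα : 0 < α) {z : ℕ → ℝ}
    (hz : ∀ᶠ p in atTop, stdNormalCDF (z p) = α / (α + p)) :
    Tendsto (fun p => z p / tauP p) atTop (𝓝 (-1)) := by
  have hzbot : Tendsto z atTop atBot := by
    refine tendsto_atBot_of_tendsto_stdNormalCDF_zero (((tendsto_const_nhds (x := α)).div_atTop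
      (tendsto_atTop_add_const_left _ α tendsto_natCast_atTop_atTop)).congr' ?_)
    exact hz.mono fun p hp => hp.symm
  have hsq : Tendsto (fun p => (z p / tauP p) ^ 2) atTop (𝓝 1) := by
    have h := (tendsto_neg_log_stdNormalCDF_div_atBot.comp hzbot).inv₀ one_ne_zero |>.mul
      ((tendsto_log_add_div_div_log_atTop hα.ne').comp tendsto_natCast_atTop_atTop)
    rw [inv_one, one_mul] at h
    refine h.congr' ?_
    filter_upwards [hz, eventually_ge_atTop 2] with p hp hp2
    have hlogp : 0 < log (p : ℝ) := log_pos (by exact_mod_cast hp2)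
    have hL : 0 < log ((α + p) / α) := log_pos ((one_lt_div hα).2
      (lt_add_of_pos_right α (by exact_mod_cast (by omega : 0 < p))))
    simp only [Function.comp_apply, hp, ← log_inv, inv_div]
    rw [div_pow, tauP_sq]
    field_simp
  have habs := hsq.sqrt.neg
  rw [sqrt_one] at habs
  refine habs.congr' ?_
  filter_upwards [hzbot.eventually_lt_atBot 0] with p hp
  have hτ : 0 ≤ tauP p := sqrt_nonneg _
  rw [sqrt_sq_eq_abs, abs_of_nonpos (div_nonpos_of_nonpos_of_nonneg hp.le hτ), neg_neg]

/-- For every fixed `x ∈ ℝ`, the rescaled MVP-IBP prior density satisfies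
`lim_{p→∞} ((α+p)/α) τ_p⁻¹ φ((x - μ_p)/τ_p) = exp(-x - 1/2)`. -/
theorem mvpIBP_rescaled_density_limit (α : ℝ) (hα : 0 < α) (μ : ℕ → ℝ)
    (hμ : ∀ p : ℕ, 2 ≤ p →
      stdNormalCDF (μ p / Real.sqrt (1 + tauP p ^ 2)) = α / (α + p))
    (x : ℝ) :
    Filter.Tendsto (fun p : ℕ => ((α + p) / α) * mvpDens μ p x)
      Filter.atTop (nhds (Real.exp (-x - 1 / 2))) := by
  set z : ℕ → ℝ := fun p => μ p / √(1 + tauP p ^ 2)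
  have hz : ∀ᶠ p in atTop, stdNormalCDF (z p) = α / (α + p) := eventually_atTop.2 ⟨2, hμ⟩
  refine (tendsto_inv_stdNormalCDF_mul_stdNormalPDF x tendsto_tauP_atTop
    (tendsto_div_tauP_of_stdNormalCDF_eq hα hz)).congr' ?_
  filter_upwards [hz] with p hp
  rw [hp, inv_div, mvpDens, div_mul_cancel₀ _ (by positivity)]
end
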